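/- Let γ_m : D → ℝⁿ be a sequence of C¹ embeddings of a disjoint union D of circles converging to a C¹ embedding γ uniformly in C¹ sense (both γ_m → γ and γ_m' → γ' uniformly), with K_m = γ_m(D) and K = γ(D). If liminf_m DCSD(K_m) > 0, then liminf_m DCSD(K_m) ≥ DCSD(K). -/

import Mathlib

open Filter

/-- Tangent vector of the parametrized link `γ : Fin k × ℝ → ℝⁿ`. -/
noncomputable def tang {n k : ℕ} (γ : Fin k × ℝ → EuclideanSpace ℝ (Fin n))
    (x : Fin k × ℝ) : EuclideanSpace ℝ (Fin n) :=
  deriv (fun s => γ (x.1, s)) x.2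

/-- The set of distances realized by double critical pairs of `γ`. -/
def dcDists {n k : ℕ} (γ : Fin k × ℝ → EuclideanSpace ℝ (Fin n)) : Set ℝ :=
  {r | ∃ x y : Fin k × ℝ, γ x ≠ γ y ∧
    (inner ℝ (γ x - γ y) (tang γ x) : ℝ) = 0 ∧
    (inner ℝ (γ x - γ y) (tang γ y) : ℝ) = 0 ∧
    r = dist (γ x) (γ y)}

/-- The double critical self distance of a link. -/
noncomputable def DCSD {n k : ℕ} (γ : Fin k × ℝ → EuclideanSpace ℝ (Fin n)) : ℝ :=
  sInf (dcDists γ)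

/-! Choose double critical pairs of `γm m` whose distances lie between `liminf / 2` and
`liminf + ε`. By periodicity they can be taken in the compact fundamental domain, so along a
subsequence they converge to a pair `(a, b)`. Uniform convergence of `γm m` and of its tangents
passes the two normality conditions to the limit, while the lower bound `liminf / 2 > 0` keeps
`γ a ≠ γ b`; hence `(a, b)` is a double critical pair of `γ` at distance at most `liminf + ε`. -/

open Set Topology

theorem Function.Periodic.deriv {E : Type*} [NormedAddCommGroup E] [NormedSpace ℝ E]
    {f : ℝ → E} {c : ℝ} (h : Function.Periodic f c) : Function.Periodic (deriv f) c := by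
  intro x
  rw [← deriv_comp_add_const, show (fun y => f (y + c)) = f from funext h]

theorem TendstoUniformly.comp_tendsto {ι ι' α β : Type*} [UniformSpace β] {F : ι → α → β}
    {f : α → β} {p : Filter ι} {q : Filter ι'} (h : TendstoUniformly F f p) {σ : ι' → ι}
    (hσ : Tendsto σ q p) : TendstoUniformly (fun j => F (σ j)) f q :=
  fun u hu => hσ.eventually (h u hu)

theorem inner_sub_eq_zero_of_tendsto {E α : Type*} [NormedAddCommGroup E] [InnerProductSpace ℝ E]
    {l : Filter α} [l.NeBot] {p q v : α → E} {p₀ q₀ v₀ : E} (hp : Tendsto p l (𝓝 p₀))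
    (hq : Tendsto q l (𝓝 q₀)) (hv : Tendsto v l (𝓝 v₀))
    (h : ∀ j, inner ℝ (p j - q j) (v j) = 0) : inner ℝ (p₀ - q₀) v₀ = 0 :=
  tendsto_nhds_unique_of_eventuallyEq ((hp.sub hq).inner hv) tendsto_const_nhds
    (Eventually.of_forall h)

section

variable {n k : ℕ}

def IsDoubleCritical (γ : Fin k × ℝ → EuclideanSpace ℝ (Fin n)) (x y : Fin k × ℝ) : Prop :=
  inner ℝ (γ x - γ y) (tang γ x) = 0 ∧ inner ℝ (γ x - γ y) (tang γ y) = 0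

theorem nonneg_of_mem_dcDists {γ : Fin k × ℝ → EuclideanSpace ℝ (Fin n)} {r : ℝ}
    (hr : r ∈ dcDists γ) : 0 ≤ r := by
  obtain ⟨x, y, -, -, -, rfl⟩ := hr
  exact dist_nonneg

theorem DCSD_nonneg (γ : Fin k × ℝ → EuclideanSpace ℝ (Fin n)) : 0 ≤ DCSD γ :=
  Real.sInf_nonneg fun _ => nonneg_of_mem_dcDists

theorem DCSD_le_dist {γ : Fin k × ℝ → EuclideanSpace ℝ (Fin n)} {x y : Fin k × ℝ}
    (hne : γ x ≠ γ y) (h : IsDoubleCritical γ x y) : DCSD γ ≤ dist (γ x) (γ y) :=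
  csInf_le ⟨0, fun _ => nonneg_of_mem_dcDists⟩ ⟨x, y, hne, h.1, h.2, rfl⟩

theorem exists_mem_Icc_eq_and_tang_eq {γ : Fin k × ℝ → EuclideanSpace ℝ (Fin n)}
    {L : Fin k → ℝ} (hL : ∀ i, 0 < L i) (hper : ∀ i, Function.Periodic (fun s => γ (i, s)) (L i))
    (x : Fin k × ℝ) :
    ∃ x' ∈ ⋃ i, {i} ×ˢ Icc 0 (L i), γ x' = γ x ∧ tang γ x' = tang γ x := by
  have hjet : Function.Periodic (fun s => (γ (x.1, s), tang γ (x.1, s))) (L x.1) :=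
    fun s => Prod.ext (hper x.1 s) ((hper x.1).deriv s)
  obtain ⟨s, hs, hjet_eq⟩ := hjet.exists_mem_Ico₀ (hL x.1) x.2
  exact ⟨(x.1, s), mem_iUnion.2 ⟨x.1, mk_mem_prod rfl (Ico_subset_Icc_self hs)⟩,
    (Prod.ext_iff.1 hjet_eq).1.symm, (Prod.ext_iff.1 hjet_eq).2.symm⟩

theorem exists_isDoubleCritical_mem_of_DCSD_mem_Ioo {C : Set (Fin k × ℝ)}
    {δ : Fin k × ℝ → EuclideanSpace ℝ (Fin n)}
    (hdom : ∀ x, ∃ x' ∈ C, δ x' = δ x ∧ tang δ x' = tang δ x) {c R : ℝ} (hc : 0 ≤ c)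
    (hδ : DCSD δ ∈ Ioo c R) :
    ∃ p ∈ C ×ˢ C, IsDoubleCritical δ p.1 p.2 ∧
      c ≤ dist (δ p.1) (δ p.2) ∧ dist (δ p.1) (δ p.2) < R := by
  -- `sInf ∅ = 0`, so `DCSD δ > c ≥ 0` forces a double critical pair to exist.
  have hne : (dcDists δ).Nonempty := nonempty_iff_ne_empty.2 fun h => by
    have := hδ.1
    simp only [DCSD, h, Real.sInf_empty] at this
    linarith
  obtain ⟨r, ⟨x, y, hxy, hx, hy, rfl⟩, hr⟩ := exists_lt_of_csInf_lt hne hδ.2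
  obtain ⟨x', hx'C, hδx, htx⟩ := hdom x
  obtain ⟨y', hy'C, hδy, hty⟩ := hdom y
  refine ⟨(x', y'), ⟨hx'C, hy'C⟩, ?_, ?_, ?_⟩ <;> simp only [IsDoubleCritical, hδx, hδy, htx, hty]
  · exact ⟨hx, hy⟩
  · exact hδ.1.le.trans (DCSD_le_dist hxy ⟨hx, hy⟩)
  · exact hr

theorem DCSD_le_of_tendsto {α : Type*} {l : Filter α} [l.NeBot]
    {δ : α → Fin k × ℝ → EuclideanSpace ℝ (Fin n)} {γ : Fin k × ℝ → EuclideanSpace ℝ (Fin n)}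
    (hγ : Continuous γ) (htang : Continuous (tang γ)) (hconv : TendstoUniformly δ γ l)
    (hconv' : TendstoUniformly (fun j => tang (δ j)) (tang γ) l)
    {x y : α → Fin k × ℝ} {a b : Fin k × ℝ} (hx : Tendsto x l (𝓝 a)) (hy : Tendsto y l (𝓝 b))
    (hcrit : ∀ j, IsDoubleCritical (δ j) (x j) (y j)) {c R : ℝ} (hc : 0 < c)
    (hlow : ∀ j, c ≤ dist (δ j (x j)) (δ j (y j))) (hup : ∀ j, dist (δ j (x j)) (δ j (y j)) ≤ R) :
    DCSD γ ≤ R := by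
  have hδx := hconv.tendsto_comp hγ.continuousAt hx
  have hδy := hconv.tendsto_comp hγ.continuousAt hy
  have htx := hconv'.tendsto_comp htang.continuousAt hx
  have hty := hconv'.tendsto_comp htang.continuousAt hy
  have hdist := hδx.dist hδy
  have hne : γ a ≠ γ b := dist_pos.1 (hc.trans_le (ge_of_tendsto' hdist hlow))
  calc DCSD γ ≤ dist (γ a) (γ b) :=
        DCSD_le_dist hne ⟨inner_sub_eq_zero_of_tendsto hδx hδy htx fun j => (hcrit j).1,
          inner_sub_eq_zero_of_tendsto hδx hδy hty fun j => (hcrit j).2⟩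
    _ ≤ R := le_of_tendsto' hdist hup

theorem DCSD_le_of_frequently_mem_Ioo {C : Set (Fin k × ℝ)} (hC : IsCompact C)
    {γm : ℕ → Fin k × ℝ → EuclideanSpace ℝ (Fin n)} {γ : Fin k × ℝ → EuclideanSpace ℝ (Fin n)}
    (hγ : Continuous γ) (htang : Continuous (tang γ)) (hconv : TendstoUniformly γm γ atTop)
    (hconv' : TendstoUniformly (fun m => tang (γm m)) (tang γ) atTop)
    (hdom : ∀ m x, ∃ x' ∈ C, γm m x' = γm m x ∧ tang (γm m) x' = tang (γm m) x)
    {c R : ℝ} (hc : 0 < c) (hfreq : ∃ᶠ m in atTop, DCSD (γm m) ∈ Ioo c R) : DCSD γ ≤ R := by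
  obtain ⟨φ, hφ, hφR⟩ := extraction_of_frequently_atTop hfreq
  choose p hpC hp using fun j =>
    exists_isDoubleCritical_mem_of_DCSD_mem_Ioo (hdom (φ j)) hc.le (hφR j)
  obtain ⟨q, -, ψ, hψ, hlim⟩ := (hC.prod hC).tendsto_subseq hpC
  have hσ : Tendsto (φ ∘ ψ) atTop atTop := (hφ.comp hψ).tendsto_atTop
  exact DCSD_le_of_tendsto hγ htang (hconv.comp_tendsto hσ) (hconv'.comp_tendsto hσ)
    hlim.fst_nhds hlim.snd_nhds (fun j => (hp (ψ j)).1) hc (fun j => (hp (ψ j)).2.1)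
    (fun j => (hp (ψ j)).2.2.le)

end

theorem liminf_dcsd_ge_general {n k : ℕ}
    (γm : ℕ → Fin k × ℝ → EuclideanSpace ℝ (Fin n))
    (γ : Fin k × ℝ → EuclideanSpace ℝ (Fin n))
    (L : Fin k → ℝ) (hLpos : ∀ i, 0 < L i)
    (hsmooth' : ∀ i, ContDiff ℝ 1 (fun s => γ (i, s)))
    (hper : ∀ m i, Function.Periodic (fun s => γm m (i, s)) (L i))
    (hconv : TendstoUniformly γm γ atTop)
    (hconv' : TendstoUniformly (fun m => tang (γm m)) (tang γ) atTop)
    (hpos : 0 < atTop.liminf (fun m => DCSD (γm m))) :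
    DCSD γ ≤ atTop.liminf (fun m => DCSD (γm m)) := by
  set Λ := atTop.liminf fun m => DCSD (γm m)
  have hbdd : IsBoundedUnder (· ≥ ·) atTop fun m => DCSD (γm m) :=
    isBoundedUnder_of ⟨0, fun m => DCSD_nonneg (γm m)⟩
  -- Without coboundedness the liminf would be the junk value `0`.
  have hcobdd : IsCoboundedUnder (· ≥ ·) atTop fun m => DCSD (γm m) := by
    by_contra h
    exact hpos.ne' (Real.liminf_of_not_isCoboundedUnder h)
  have hlow : ∀ᶠ m in atTop, Λ / 2 < DCSD (γm m) :=
    eventually_lt_of_lt_liminf (half_lt_self hpos) hbdd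
  have hγ : Continuous γ :=
    continuous_prod_of_discrete_left.2 fun i => (hsmooth' i).continuous
  have htang : Continuous (tang γ) :=
    continuous_prod_of_discrete_left.2 fun i => (hsmooth' i).continuous_deriv le_rfl
  refine le_of_forall_pos_le_add fun ε hε =>
    DCSD_le_of_frequently_mem_Ioo (isCompact_iUnion fun i => isCompact_singleton.prod isCompact_Icc)
      hγ htang hconv hconv' (fun m => exists_mem_Icc_eq_and_tang_eq hLpos (hper m))
      (half_pos hpos) ?_
  exact ((frequently_lt_of_liminf_lt hcobdd (lt_add_of_pos_right Λ hε)).and_eventually hlow).mono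
    fun m h => ⟨h.2, h.1⟩

/-- Lower semicontinuity of DCSD under C¹-uniform convergence of embedded links:
if liminf DCSD(K_m) > 0 then liminf DCSD(K_m) ≥ DCSD(K). -/
theorem liminf_dcsd_ge {n k : ℕ}
    (γm : ℕ → Fin k × ℝ → EuclideanSpace ℝ (Fin n))
    (γ : Fin k × ℝ → EuclideanSpace ℝ (Fin n))
    (L : Fin k → ℝ) (hLpos : ∀ i, 0 < L i)
    (hsmooth : ∀ m i, ContDiff ℝ 1 (fun s => γm m (i, s)))
    (hsmooth' : ∀ i, ContDiff ℝ 1 (fun s => γ (i, s)))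
    (hper : ∀ m i, Function.Periodic (fun s => γm m (i, s)) (L i))
    (hper' : ∀ i, Function.Periodic (fun s => γ (i, s)) (L i))
    (hreg : ∀ m x, tang (γm m) x ≠ 0) (hreg' : ∀ x, tang γ x ≠ 0)
    (hinjm : ∀ m, ∀ x y : Fin k × ℝ, x.2 ∈ Set.Ico 0 (L x.1) →
      y.2 ∈ Set.Ico 0 (L y.1) → γm m x = γm m y → x = y)
    (hinj : ∀ x y : Fin k × ℝ, x.2 ∈ Set.Ico 0 (L x.1) →
      y.2 ∈ Set.Ico 0 (L y.1) → γ x = γ y → x = y)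
    (hconv : TendstoUniformly γm γ atTop)
    (hconv' : TendstoUniformly (fun m => tang (γm m)) (tang γ) atTop)
    (hpos : 0 < atTop.liminf (fun m => DCSD (γm m))) :
    DCSD γ ≤ atTop.liminf (fun m => DCSD (γm m)) :=
  liminf_dcsd_ge_general γm γ L hLpos hsmooth' hper hconv hconv' hpos
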